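/- arXiv:2004.03984 — 2 statements merged into one kernel-verified Lean document; each statement's English description precedes it below -/
import Mathlib

section
/- Let a : [0,1] × ℝ → M_n(ℝ) be smooth, write a_s(t) := a(s,t), and let U_s : [0,1] → GL_n(ℝ) (or M_n(ℝ)) solve the ODE U_s′(t) = a_s(t) U_s(t) with U_s(0) = I. Suppose there is a smooth b : [0,1] × ℝ → M_n(ℝ) with ∂_s a = ∂_t b + [b, a] (matrix commutator). Then ∂_s U_s(1) = b_s(1) U_s(1) − U_s(1) b_s(0). -/
open Set Real Filter

namespace Stmt12Aux

variable {n : ℕ}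

abbrev Mat (n : ℕ) := Matrix (Fin n) (Fin n) ℝ

lemma entry_le_norm (x : Fin n → Fin n → ℝ) (i j : Fin n) : |x i j| ≤ ‖x‖ :=
  le_trans (by simpa using norm_le_pi_norm (x i) j) (norm_le_pi_norm x i)

lemma mul_entry_bound {A B : Mat n} {CA CB : ℝ}
    (hA : ∀ i j, |A i j| ≤ CA) (hB : ∀ i j, |B i j| ≤ CB) (hCA : 0 ≤ CA)
    (i j : Fin n) : |(A * B) i j| ≤ n * (CA * CB) := by
  rw [Matrix.mul_apply]
  calc |∑ k, A i k * B k j| ≤ ∑ k, |A i k * B k j| := Finset.abs_sum_le_sum_abs _ _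
    _ ≤ ∑ _k : Fin n, CA * CB := Finset.sum_le_sum fun k _ => by
        rw [abs_mul]; exact mul_le_mul (hA i k) (hB k j) (abs_nonneg _) hCA
    _ = n * (CA * CB) := by simp [Finset.card_univ, mul_comm]

lemma cont_of_partial {f : ℝ × ℝ → ℝ} {g : ℝ → ℝ → ℝ} (hf : ContDiff ℝ (⊤ : ℕ∞) f)
    (hg : ∀ s t, HasDerivAt (fun τ => f (s, τ)) (g s t) t) :
    Continuous fun p : ℝ × ℝ => g p.1 p.2 := by
  have he : (fun p : ℝ × ℝ => g p.1 p.2) = fun p => fderiv ℝ f p (0, 1) := by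
    funext p
    have hF : HasFDerivAt f (fderiv ℝ f p) p := (hf.differentiable (by simp) p).hasFDerivAt
    have hγ : HasDerivAt (fun τ => ((p.1, τ) : ℝ × ℝ)) ((0 : ℝ), (1 : ℝ)) p.2 :=
      (hasDerivAt_const p.2 p.1).prodMk (hasDerivAt_id p.2)
    exact (hg p.1 p.2).unique (hF.comp_hasDerivAt p.2 hγ)
  rw [he]
  exact (hf.continuous_fderiv (by simp)).clm_apply continuous_const

lemma gauge_alg (aσ as bs bt b0 Uσ Us : Mat n) (c : ℝ) :
    aσ * (Uσ - Us - c • (bs * Us - Us * b0))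
      + (aσ - as - c • (bt + (bs * as - as * bs))) * Us
      + c • ((aσ - as) * (bs * Us - Us * b0))
    = aσ * Uσ - as * Us - c • (bt * Us + bs * (as * Us) - (as * Us) * b0) := by
  simp only [mul_sub, sub_mul, add_mul, mul_add, smul_sub, smul_add, mul_smul_comm,
    smul_mul_assoc, mul_assoc]
  abel

/-- `D`: the candidate derivative matrix. -/
def DmF (b U : ℝ → ℝ → Mat n) (s t : ℝ) : Mat n := b s t * U s t - U s t * b s 0

/-- `E`: the error term. -/
def EmF (b U : ℝ → ℝ → Mat n) (s σ t : ℝ) : Mat n :=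
  U σ t - U s t - (σ - s) • DmF b U s t

/-- `g`: the s-derivative of a. -/
def gmF (a b bt : ℝ → ℝ → Mat n) (σ t : ℝ) : Mat n :=
  bt σ t + (b σ t * a σ t - a σ t * b σ t)

/-- `F`: the t-derivative of the error term. -/
def FmF (a b bt U : ℝ → ℝ → Mat n) (s σ t : ℝ) : Mat n :=
  a σ t * EmF b U s σ t + (a σ t - a s t - (σ - s) • gmF a b bt s t) * U s t
    + (σ - s) • ((a σ t - a s t) * DmF b U s t)

def EpF (b U : ℝ → ℝ → Mat n) (s σ t : ℝ) : Fin n → Fin n → ℝ := fun i j => EmF b U s σ t i j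
def FpF (a b bt U : ℝ → ℝ → Mat n) (s σ t : ℝ) : Fin n → Fin n → ℝ :=
  fun i j => FmF a b bt U s σ t i j
def gpF (a b bt : ℝ → ℝ → Mat n) (σ t : ℝ) : Fin n → Fin n → ℝ := fun i j => gmF a b bt σ t i j
def apF (a : ℝ → ℝ → Mat n) (σ t : ℝ) : Fin n → Fin n → ℝ := fun i j => a σ t i j


lemma hDt' {a b bt U : ℝ → ℝ → Mat n}
    (hbt : ∀ (s t : ℝ) (i j : Fin n), HasDerivAt (fun τ => b s τ i j) (bt s t i j) t)
    (hUode : ∀ (s t : ℝ) (i j : Fin n),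
      HasDerivAt (fun τ => U s τ i j) ((a s t * U s t) i j) t)
    (s t : ℝ) (i j : Fin n) :
    HasDerivAt (fun τ => DmF b U s τ i j)
      ((bt s t * U s t + b s t * (a s t * U s t) - (a s t * U s t) * b s 0) i j) t := by
  have h1 : HasDerivAt (fun τ => ∑ k, b s τ i k * U s τ k j)
      (∑ k, (bt s t i k * U s t k j + b s t i k * (a s t * U s t) k j)) t :=
    HasDerivAt.fun_sum fun k _ => (hbt s t i k).mul (hUode s t k j)
  have h2 : HasDerivAt (fun τ => ∑ k, U s τ i k * b s 0 k j)
      (∑ k, (a s t * U s t) i k * b s 0 k j) t :=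
    HasDerivAt.fun_sum fun k _ => (hUode s t i k).mul_const _
  have h3 := h1.sub h2
  have hfun : (fun τ => DmF b U s τ i j)
      = fun τ => (∑ k, b s τ i k * U s τ k j) - ∑ k, U s τ i k * b s 0 k j := by
    funext τ; simp [DmF, Matrix.sub_apply, Matrix.mul_apply]
  rw [hfun]
  refine h3.congr_deriv ?_
  simp [Matrix.add_apply, Matrix.sub_apply, Matrix.mul_apply, Finset.sum_add_distrib]

lemma hEt' {a b bt U : ℝ → ℝ → Mat n}
    (hbt : ∀ (s t : ℝ) (i j : Fin n), HasDerivAt (fun τ => b s τ i j) (bt s t i j) t)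
    (hUode : ∀ (s t : ℝ) (i j : Fin n),
      HasDerivAt (fun τ => U s τ i j) ((a s t * U s t) i j) t)
    (s σ t : ℝ) (i j : Fin n) :
    HasDerivAt (fun τ => EmF b U s σ τ i j) (FmF a b bt U s σ t i j) t := by
  have h3 := ((hUode σ t i j).sub (hUode s t i j)).sub
    ((hDt' hbt hUode s t i j).const_mul (σ - s))
  have hfun : (fun τ => EmF b U s σ τ i j)
      = fun τ => U σ τ i j - U s τ i j - (σ - s) * DmF b U s τ i j := by
    funext τ; simp [EmF, Matrix.sub_apply, Matrix.smul_apply, smul_eq_mul]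
  rw [hfun]
  refine h3.congr_deriv ?_
  have halg : FmF a b bt U s σ t = a σ t * U σ t - a s t * U s t
      - (σ - s) • (bt s t * U s t + b s t * (a s t * U s t) - (a s t * U s t) * b s 0) := by
    rw [FmF, EmF, gmF, DmF]
    exact gauge_alg _ _ _ _ _ _ _ _
  rw [halg]
  simp [Matrix.sub_apply, Matrix.smul_apply, smul_eq_mul]

end Stmt12Aux
set_option maxHeartbeats 2000000 in
open Stmt12Aux in
/-- **Gauge covariance of the holonomy.** Let `a : [s,t] ↦ a s t` be a smooth
`Mₙ(ℝ)`-valued function, and let `U s` solve `∂ₜ U s t = a s t · U s t`, `U s 0 = 1`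
(entrywise derivatives). If there is a smooth `b` with `∂ₛ a = ∂ₜ b + [b,a]`
(`∂ₜ b` given by `bt`), then `∂ₛ U s 1 = b s 1 · U s 1 - U s 1 · b s 0`. -/
theorem stmt12 (n : ℕ)
    (a b bt U : ℝ → ℝ → Matrix (Fin n) (Fin n) ℝ)
    (ha : ∀ i j, ContDiff ℝ (⊤ : ℕ∞) fun p : ℝ × ℝ => a p.1 p.2 i j)
    (hb : ∀ i j, ContDiff ℝ (⊤ : ℕ∞) fun p : ℝ × ℝ => b p.1 p.2 i j)
    (hbt : ∀ (s t : ℝ) (i j : Fin n),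
      HasDerivAt (fun τ => b s τ i j) (bt s t i j) t)
    (hU0 : ∀ s, U s 0 = 1)
    (hUode : ∀ (s t : ℝ) (i j : Fin n),
      HasDerivAt (fun τ => U s τ i j) ((a s t * U s t) i j) t)
    (hgauge : ∀ (s t : ℝ) (i j : Fin n),
      HasDerivAt (fun σ => a σ t i j)
        ((bt s t + (b s t * a s t - a s t * b s t)) i j) s) :
    ∀ (s : ℝ) (i j : Fin n),
      HasDerivAt (fun σ => U σ 1 i j)
        ((b s 1 * U s 1 - U s 1 * b s 0) i j) s := by
  intro s
  rcases Nat.eq_zero_or_pos n with hn | hn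
  · subst hn; intro i j; exact i.elim0
  -- pi-valued derivatives
  have hEtP : ∀ σ t, HasDerivAt (fun τ => EpF b U s σ τ) (FpF a b bt U s σ t) t := fun σ t =>
    hasDerivAt_pi.mpr fun i => hasDerivAt_pi.mpr fun j => hEt' hbt hUode s σ t i j
  have hgP : ∀ σ t, HasDerivAt (fun σ' => apF a σ' t) (gpF a b bt σ t) σ := fun σ t =>
    hasDerivAt_pi.mpr fun i => hasDerivAt_pi.mpr fun j => hgauge σ t i j
  -- continuity facts
  have hacontP : Continuous fun p : ℝ × ℝ => apF a p.1 p.2 :=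
    continuous_pi fun i => continuous_pi fun j => (ha i j).continuous
  have hbtcont : ∀ i j, Continuous fun p : ℝ × ℝ => bt p.1 p.2 i j := fun i j =>
    cont_of_partial (hb i j) (fun s' t' => hbt s' t' i j)
  have hgcontP : Continuous fun p : ℝ × ℝ => gpF a b bt p.1 p.2 := by
    refine continuous_pi fun i => continuous_pi fun j => ?_
    have he : (fun p : ℝ × ℝ => gpF a b bt p.1 p.2 i j)
        = fun p => bt p.1 p.2 i j + ((∑ k, b p.1 p.2 i k * a p.1 p.2 k j)
            - ∑ k, a p.1 p.2 i k * b p.1 p.2 k j) := by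
      funext p
      simp [gpF, gmF, Matrix.add_apply, Matrix.sub_apply, Matrix.mul_apply]
    rw [he]
    exact (hbtcont i j).add
      ((continuous_finset_sum _ fun k _ => ((hb i k).continuous.mul (ha k j).continuous)).sub
       (continuous_finset_sum _ fun k _ => ((ha i k).continuous.mul (hb k j).continuous)))
  have hUcont : ∀ i j, Continuous fun t => U s t i j := fun i j =>
    continuous_iff_continuousAt.mpr fun t => (hUode s t i j).continuousAt
  have hDcont : ∀ i j, Continuous fun t => DmF b U s t i j := fun i j =>
    continuous_iff_continuousAt.mpr fun t => (hDt' hbt hUode s t i j).continuousAt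
  -- compact set
  set C : Set (ℝ × ℝ) := (Set.Icc (s - 1) (s + 1)) ×ˢ (Set.Icc (0 : ℝ) 1) with hCdef
  have hCcomp : IsCompact C := isCompact_Icc.prod isCompact_Icc
  have hmemC : ∀ σ t : ℝ, |σ - s| ≤ 1 → t ∈ Set.Icc (0:ℝ) 1 → ((σ, t) : ℝ × ℝ) ∈ C := by
    intro σ t hσ ht
    have h := abs_le.mp hσ
    exact ⟨⟨by linarith [h.1], by linarith [h.2]⟩, ht⟩
  -- bound on a
  obtain ⟨K₀', hK₀'⟩ := hCcomp.exists_bound_of_continuousOn hacontP.continuousOn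
  set K₀ : ℝ := max K₀' 0 with hK₀def
  have hK₀0 : 0 ≤ K₀ := le_max_right _ _
  have hK₀ : ∀ σ t, |σ - s| ≤ 1 → t ∈ Set.Icc (0:ℝ) 1 → ∀ i j, |a σ t i j| ≤ K₀ := by
    intro σ t hσ ht i j
    calc |a σ t i j| ≤ ‖apF a σ t‖ := entry_le_norm _ i j
      _ ≤ K₀' := hK₀' (σ, t) (hmemC σ t hσ ht)
      _ ≤ K₀ := le_max_left _ _
  -- bound on U s on [0,1]
  obtain ⟨MU', hMU'⟩ := isCompact_Icc.exists_bound_of_continuousOn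
    (f := fun t => apF U s t)
    (Continuous.continuousOn (continuous_pi fun i => continuous_pi fun j => hUcont i j))
  set MU : ℝ := max MU' 0 with hMUdef
  have hMU0 : 0 ≤ MU := le_max_right _ _
  have hMU : ∀ t ∈ Set.Icc (0:ℝ) 1, ∀ i j, |U s t i j| ≤ MU := fun t ht i j =>
    le_trans (le_trans (entry_le_norm (apF U s t) i j) (hMU' t ht)) (le_max_left _ _)
  -- bound on D on [0,1]
  obtain ⟨MD', hMD'⟩ := isCompact_Icc.exists_bound_of_continuousOn
    (f := fun t => (fun i j => DmF b U s t i j : Fin n → Fin n → ℝ))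
    (Continuous.continuousOn (continuous_pi fun i => continuous_pi fun j => hDcont i j))
  set MD : ℝ := max MD' 0 with hMDdef
  have hMD0 : 0 ≤ MD := le_max_right _ _
  have hMD : ∀ t ∈ Set.Icc (0:ℝ) 1, ∀ i j, |DmF b U s t i j| ≤ MD := fun t ht i j =>
    le_trans (le_trans (entry_le_norm _ i j) (hMD' t ht)) (le_max_left _ _)
  -- bound on g s on [0,1]
  obtain ⟨G', hG'⟩ := isCompact_Icc.exists_bound_of_continuousOn
    (f := fun t => gpF a b bt s t)
    (Continuous.continuousOn (hgcontP.comp (Continuous.prodMk_right s)))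
  set G : ℝ := max G' 0 with hGdef
  have hG0 : 0 ≤ G := le_max_right _ _
  have hG : ∀ t ∈ Set.Icc (0:ℝ) 1, ‖gpF a b bt s t‖ ≤ G := fun t ht =>
    le_trans (hG' t ht) (le_max_left _ _)
  -- Gronwall constant
  set K : ℝ := n * K₀ + 1 with hKdef
  have hK1 : (1:ℝ) ≤ K := by
    have : (0:ℝ) ≤ n * K₀ := by positivity
    linarith
  have hKpos : (0:ℝ) < K := lt_of_lt_of_le one_pos hK1
  -- initial condition: E σ 0 = 0
  have hE0 : ∀ σ, EpF b U s σ 0 = 0 := by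
    intro σ
    funext i j
    simp [EpF, EmF, DmF, hU0, Matrix.mul_one, Matrix.one_mul]
  -- MAIN estimate
  have main : ∀ c₀ > (0:ℝ), ∀ᶠ σ in nhds s, ‖EpF b U s σ 1‖ ≤ c₀ * |σ - s| := by
    intro c₀ hc₀
    set Q : ℝ := n * MU + n * (1 + G) * MD + 1 with hQdef
    have hQpos : 0 < Q := by positivity
    set R : ℝ := Real.exp K with hRdef
    have hRpos : 0 < R := Real.exp_pos K
    set εt : ℝ := min 1 (c₀ / (Q * R)) with hεtdef
    have hεtpos : 0 < εt := lt_min one_pos (by positivity)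
    have hεt1 : εt ≤ 1 := min_le_left _ _
    have hεtQ : εt * (Q * R) ≤ c₀ := by
      calc εt * (Q * R) ≤ (c₀ / (Q * R)) * (Q * R) :=
            mul_le_mul_of_nonneg_right (min_le_right _ _) (by positivity)
        _ = c₀ := div_mul_cancel₀ _ (by positivity)
    obtain ⟨δ, hδpos, hδ⟩ := Metric.uniformContinuousOn_iff.mp
      (hCcomp.uniformContinuousOn_of_continuous hgcontP.continuousOn) εt hεtpos
    set δ' : ℝ := min (δ / 2) (min 1 εt) with hδ'def
    have hδ'pos : 0 < δ' := lt_min (by linarith) (lt_min one_pos hεtpos)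
    have hδ'1 : δ' ≤ 1 := le_trans (min_le_right _ _) (min_le_left _ _)
    have hδ'εt : δ' ≤ εt := le_trans (min_le_right _ _) (min_le_right _ _)
    have hδ'δ : δ' < δ := lt_of_le_of_lt (min_le_left _ _) (by linarith)
    rw [Metric.eventually_nhds_iff]
    refine ⟨δ', hδ'pos, ?_⟩
    intro σ hσd
    rw [Real.dist_eq] at hσd
    have hc : |σ - s| ≤ δ' := le_of_lt hσd
    have hc1 : |σ - s| ≤ 1 := le_trans hc hδ'1
    have hcεt : |σ - s| ≤ εt := le_trans hc hδ'εt
    -- MVT / uniform-continuity bound on the first-order Taylor remainder of a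
    have hMVT : ∀ t ∈ Set.Icc (0:ℝ) 1,
        ‖apF a σ t - apF a s t - (σ - s) • gpF a b bt s t‖ ≤ εt * |σ - s| := by
      intro t ht
      have hconv : Convex ℝ (Set.Icc (s - δ') (s + δ')) := convex_Icc _ _
      have hsS : s ∈ Set.Icc (s - δ') (s + δ') := ⟨by linarith, by linarith⟩
      have hσS : σ ∈ Set.Icc (s - δ') (s + δ') := by
        have h := abs_le.mp hc; exact ⟨by linarith [h.1], by linarith [h.2]⟩
      have hder : ∀ ξ ∈ Set.Icc (s - δ') (s + δ'),
          HasDerivWithinAt (fun σ' => apF a σ' t - σ' • gpF a b bt s t)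
            (gpF a b bt ξ t - gpF a b bt s t) (Set.Icc (s - δ') (s + δ')) ξ := by
        intro ξ _
        have h2 : HasDerivAt (fun σ' : ℝ => σ' • gpF a b bt s t) (gpF a b bt s t) ξ := by
          simpa using (hasDerivAt_id ξ).smul_const (gpF a b bt s t)
        exact ((hgP ξ t).sub h2).hasDerivWithinAt
      have hbd : ∀ ξ ∈ Set.Icc (s - δ') (s + δ'), ‖gpF a b bt ξ t - gpF a b bt s t‖ ≤ εt := by
        intro ξ hξ
        have h1 : |ξ - s| ≤ δ' := abs_le.mpr ⟨by linarith [hξ.1], by linarith [hξ.2]⟩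
        have hm1 : ((ξ, t) : ℝ × ℝ) ∈ C := hmemC ξ t (le_trans h1 hδ'1) ht
        have hm2 : ((s, t) : ℝ × ℝ) ∈ C := hmemC s t (by simp) ht
        have hde : dist ((ξ, t) : ℝ × ℝ) ((s, t) : ℝ × ℝ) = |ξ - s| := by
          rw [Prod.dist_eq, dist_self, Real.dist_eq]
          exact max_eq_left (abs_nonneg _)
        have hdist : dist ((ξ, t) : ℝ × ℝ) ((s, t) : ℝ × ℝ) < δ := by
          rw [hde]; exact lt_of_le_of_lt h1 hδ'δ
        have := hδ (ξ, t) hm1 (s, t) hm2 hdist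
        rw [dist_eq_norm] at this
        exact this.le
      have hmvt := Convex.norm_image_sub_le_of_norm_hasDerivWithin_le hder hbd hconv hsS hσS
      have heq : (apF a σ t - σ • gpF a b bt s t) - (apF a s t - s • gpF a b bt s t)
          = apF a σ t - apF a s t - (σ - s) • gpF a b bt s t := by
        rw [sub_smul]; abel
      calc ‖apF a σ t - apF a s t - (σ - s) • gpF a b bt s t‖
          = ‖(apF a σ t - σ • gpF a b bt s t) - (apF a s t - s • gpF a b bt s t)‖ := by
            rw [heq]
        _ ≤ εt * ‖σ - s‖ := hmvt
        _ = εt * |σ - s| := by rw [Real.norm_eq_abs]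
    -- Gronwall
    set εσ : ℝ := n * ((εt * |σ - s|) * MU) + |σ - s| * (n * ((|σ - s| * (εt + G)) * MD))
      with hεσdef
    have hεσ0 : 0 ≤ εσ := by positivity
    have hbound : ∀ t ∈ Set.Ico (0:ℝ) 1,
        ‖FpF a b bt U s σ t‖ ≤ K * ‖EpF b U s σ t‖ + εσ := by
      intro t ht'
      have ht : t ∈ Set.Icc (0:ℝ) 1 := ⟨ht'.1, le_of_lt ht'.2⟩
      have he0 : (0:ℝ) ≤ ‖EpF b U s σ t‖ := norm_nonneg _
      have hh : ∀ i j, |(a σ t - a s t - (σ - s) • gmF a b bt s t) i j| ≤ εt * |σ - s| := by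
        intro i j
        have heq : (a σ t - a s t - (σ - s) • gmF a b bt s t) i j
            = (apF a σ t - apF a s t - (σ - s) • gpF a b bt s t) i j := by
          simp [apF, gpF, Matrix.sub_apply, Matrix.smul_apply, Pi.sub_apply, Pi.smul_apply]
        rw [heq]
        exact le_trans (entry_le_norm _ i j) (hMVT t ht)
      have hasub : ∀ i j, |(a σ t - a s t) i j| ≤ |σ - s| * (εt + G) := by
        intro i j
        have h1 : (a σ t - a s t) i j
            = (a σ t - a s t - (σ - s) • gmF a b bt s t) i j
              + (σ - s) * gmF a b bt s t i j := by
          simp only [Matrix.sub_apply, Matrix.smul_apply, smul_eq_mul]; ring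
        rw [h1]
        have hg1 : |gmF a b bt s t i j| ≤ G :=
          le_trans (entry_le_norm (gpF a b bt s t) i j) (hG t ht)
        calc |(a σ t - a s t - (σ - s) • gmF a b bt s t) i j + (σ - s) * gmF a b bt s t i j|
            ≤ |(a σ t - a s t - (σ - s) • gmF a b bt s t) i j|
              + |(σ - s) * gmF a b bt s t i j| := abs_add_le _ _
          _ ≤ εt * |σ - s| + |σ - s| * G := by
              refine add_le_add (hh i j) ?_
              rw [abs_mul]
              exact mul_le_mul_of_nonneg_left hg1 (abs_nonneg _)
          _ = |σ - s| * (εt + G) := by ring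
      have hEe : ∀ i j, |EmF b U s σ t i j| ≤ ‖EpF b U s σ t‖ := fun i j =>
        entry_le_norm (EpF b U s σ t) i j
      have hF : ∀ i j, |FmF a b bt U s σ t i j| ≤ K * ‖EpF b U s σ t‖ + εσ := by
        intro i j
        have t1 : |(a σ t * EmF b U s σ t) i j| ≤ n * (K₀ * ‖EpF b U s σ t‖) :=
          mul_entry_bound (fun i j => hK₀ σ t hc1 ht i j) hEe hK₀0 i j
        have t2 : |((a σ t - a s t - (σ - s) • gmF a b bt s t) * U s t) i j|
            ≤ n * ((εt * |σ - s|) * MU) :=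
          mul_entry_bound hh (fun i j => hMU t ht i j) (by positivity) i j
        have t3 : |((a σ t - a s t) * DmF b U s t) i j|
            ≤ n * ((|σ - s| * (εt + G)) * MD) :=
          mul_entry_bound hasub (fun i j => hMD t ht i j) (by positivity) i j
        have hsplit : FmF a b bt U s σ t i j = (a σ t * EmF b U s σ t) i j
            + ((a σ t - a s t - (σ - s) • gmF a b bt s t) * U s t) i j
            + (σ - s) * ((a σ t - a s t) * DmF b U s t) i j := by
          simp [FmF, Matrix.add_apply, Matrix.smul_apply, smul_eq_mul]
        rw [hsplit]
        have t3' : |(σ - s) * ((a σ t - a s t) * DmF b U s t) i j|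
            ≤ |σ - s| * (n * ((|σ - s| * (εt + G)) * MD)) := by
          rw [abs_mul]
          exact mul_le_mul_of_nonneg_left t3 (abs_nonneg _)
        calc |(a σ t * EmF b U s σ t) i j
              + ((a σ t - a s t - (σ - s) • gmF a b bt s t) * U s t) i j
              + (σ - s) * ((a σ t - a s t) * DmF b U s t) i j|
            ≤ |(a σ t * EmF b U s σ t) i j
              + ((a σ t - a s t - (σ - s) • gmF a b bt s t) * U s t) i j|
              + |(σ - s) * ((a σ t - a s t) * DmF b U s t) i j| := abs_add_le _ _
          _ ≤ (|(a σ t * EmF b U s σ t) i j|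
              + |((a σ t - a s t - (σ - s) • gmF a b bt s t) * U s t) i j|)
              + |(σ - s) * ((a σ t - a s t) * DmF b U s t) i j| :=
                add_le_add (abs_add_le _ _) le_rfl
          _ ≤ K * ‖EpF b U s σ t‖ + εσ := by
              rw [hεσdef, hKdef]
              nlinarith [t1, t2, t3', he0, hK₀0]
      have hnonneg : (0:ℝ) ≤ K * ‖EpF b U s σ t‖ + εσ :=
        add_nonneg (mul_nonneg hKpos.le he0) hεσ0
      rw [pi_norm_le_iff_of_nonneg hnonneg]
      intro i
      rw [pi_norm_le_iff_of_nonneg hnonneg]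
      intro j
      rw [Real.norm_eq_abs]
      exact hF i j
    have hEcont : ContinuousOn (fun t => EpF b U s σ t) (Set.Icc (0:ℝ) 1) :=
      (continuous_iff_continuousAt.mpr fun t => (hEtP σ t).continuousAt).continuousOn
    have hEderiv : ∀ t ∈ Set.Ico (0:ℝ) 1, HasDerivWithinAt (fun τ => EpF b U s σ τ)
        (FpF a b bt U s σ t) (Set.Ici t) t := fun t _ => (hEtP σ t).hasDerivWithinAt
    have h0 : ‖EpF b U s σ 0‖ ≤ 0 := by rw [hE0]; simp
    have hGron := norm_le_gronwallBound_of_norm_deriv_right_le hEcont hEderiv h0 hbound 1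
      (by norm_num)
    have hgb : gronwallBound 0 K εσ (1 - 0) ≤ εσ * R := by
      have hval : gronwallBound 0 K εσ (1 - 0)
          = 0 * Real.exp (K * (1 - 0)) + εσ / K * (Real.exp (K * (1 - 0)) - 1) := by
        rw [gronwallBound_of_K_ne_0 (ne_of_gt hKpos)]
      have hKK : K * (1 - 0) = K := by ring
      rw [hval, hKK]
      have h1 : εσ / K ≤ εσ := div_le_self hεσ0 hK1
      have h3 : (0:ℝ) ≤ εσ / K := div_nonneg hεσ0 hKpos.le
      have h2 : (0:ℝ) < Real.exp K := Real.exp_pos K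
      have hRR : R = Real.exp K := hRdef
      nlinarith [mul_le_mul_of_nonneg_right h1 h2.le, h3, h2]
    have hεσfin : εσ * R ≤ c₀ * |σ - s| := by
      have habs0 : (0:ℝ) ≤ |σ - s| := abs_nonneg _
      have hstep : εσ ≤ |σ - s| * (εt * Q) := by
        have h2 : |σ - s| * (εt + G) ≤ εt * (1 + G) :=
          mul_le_mul hcεt (by linarith) (by positivity) hεtpos.le
        have h3 : |σ - s| * ((n : ℝ) * MD) * (|σ - s| * (εt + G))
            ≤ |σ - s| * ((n : ℝ) * MD) * (εt * (1 + G)) :=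
          mul_le_mul_of_nonneg_left h2 (by positivity)
        rw [hεσdef, hQdef]
        nlinarith [h3, habs0, hεtpos.le, hMU0, hMD0, mul_nonneg habs0 hεtpos.le]
      calc εσ * R ≤ (|σ - s| * (εt * Q)) * R :=
            mul_le_mul_of_nonneg_right hstep hRpos.le
        _ = |σ - s| * (εt * (Q * R)) := by ring
        _ ≤ |σ - s| * c₀ := mul_le_mul_of_nonneg_left hεtQ habs0
        _ = c₀ * |σ - s| := by ring
    calc ‖EpF b U s σ 1‖ ≤ gronwallBound 0 K εσ (1 - 0) := hGron
      _ ≤ εσ * R := hgb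
      _ ≤ c₀ * |σ - s| := hεσfin
  -- conclude
  intro i j
  rw [hasDerivAt_iff_isLittleO]
  have he : (fun σ => U σ 1 i j - U s 1 i j - (σ - s) • (b s 1 * U s 1 - U s 1 * b s 0) i j)
      = fun σ => EpF b U s σ 1 i j := by
    funext σ
    simp [EpF, EmF, DmF, Matrix.sub_apply, Matrix.smul_apply, smul_eq_mul]
  rw [he, Asymptotics.isLittleO_iff]
  intro c₀ hc₀
  filter_upwards [main c₀ hc₀] with σ hσ
  calc ‖EpF b U s σ 1 i j‖ ≤ ‖EpF b U s σ 1‖ := entry_le_norm _ i j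
    _ ≤ c₀ * |σ - s| := hσ
    _ = c₀ * ‖σ - s‖ := by rw [Real.norm_eq_abs]
end

section
/- In the setting of the previous statement (∂_s a = ∂_t b + [b,a], U_s the solution of U_s′ = a_s U_s, U_s(0)=I), if additionally b_s(1) = b_s(0) for all s (closed-loop condition), then the trace of the holonomy is invariant: ∂_s tr(U_s(1)) = 0. -/
open Matrix Set

attribute [local instance] Matrix.linftyOpNormedRing Matrix.linftyOpNormedAlgebra

lemma hasDerivAt_matrix' {n : ℕ} {f : ℝ → Matrix (Fin n) (Fin n) ℝ} {f' : Matrix (Fin n) (Fin n) ℝ}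
    {x : ℝ} (h : ∀ i j, HasDerivAt (fun t => f t i j) (f' i j) x) : HasDerivAt f f' x := by
  have key : ∀ g : Matrix (Fin n) (Fin n) ℝ,
      g = ∑ i, ∑ j, g i j • Matrix.single i j (1 : ℝ) := by
    intro g
    conv_lhs => rw [matrix_eq_sum_single g]
    simp [smul_single]
  have H : HasDerivAt (fun t => ∑ i, ∑ j, f t i j • Matrix.single i j (1 : ℝ))
      (∑ i, ∑ j, f' i j • Matrix.single i j (1 : ℝ)) x :=
    HasDerivAt.fun_sum fun i _ => HasDerivAt.fun_sum fun j _ => (h i j).smul_const _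
  rw [← key f'] at H
  convert H using 1
  funext t
  exact key (f t)

set_option maxHeartbeats 2000000 in
private lemma stmt13_aux (n : ℕ)
    (a b bt U : ℝ → ℝ → Matrix (Fin n) (Fin n) ℝ)
    (ha : ∀ i j, ContDiff ℝ (⊤ : ℕ∞) fun p : ℝ × ℝ => a p.1 p.2 i j)
    (hb : ∀ i j, ContDiff ℝ (⊤ : ℕ∞) fun p : ℝ × ℝ => b p.1 p.2 i j)
    (hbt : ∀ (s t : ℝ) (i j : Fin n),
      HasDerivAt (fun τ => b s τ i j) (bt s t i j) t)
    (hU0 : ∀ s, U s 0 = 1)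
    (hUode : ∀ (s t : ℝ) (i j : Fin n),
      HasDerivAt (fun τ => U s τ i j) ((a s t * U s t) i j) t)
    (hgauge : ∀ (s t : ℝ) (i j : Fin n),
      HasDerivAt (fun σ => a σ t i j)
        ((bt s t + (b s t * a s t - a s t * b s t)) i j) s)
    (s : ℝ) :
    HasDerivAt (fun σ => U σ 1) (b s 1 * U s 1 - U s 1 * b s 0) s := by
  have hU' : ∀ σ t, HasDerivAt (fun τ => U σ τ) (a σ t * U σ t) t :=
    fun σ t => hasDerivAt_matrix' (fun i j => hUode σ t i j)
  have hb' : ∀ σ t, HasDerivAt (fun τ => b σ τ) (bt σ t) t :=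
    fun σ t => hasDerivAt_matrix' (fun i j => hbt σ t i j)
  set C : ℝ → ℝ → Matrix (Fin n) (Fin n) ℝ :=
    fun σ t => bt σ t + (b σ t * a σ t - a σ t * b σ t) with hCdef
  have ha' : ∀ σ t, HasDerivAt (fun ρ => a ρ t) (C σ t) σ :=
    fun σ t => hasDerivAt_matrix' (fun i j => hgauge σ t i j)
  set V : ℝ → Matrix (Fin n) (Fin n) ℝ := fun t => b s t * U s t - U s t * b s 0 with hVdef
  have hV' : ∀ t, HasDerivAt V (a s t * V t + C s t * U s t) t := by
    intro t
    have h1 := ((hb' s t).mul (hU' s t)).sub ((hU' s t).mul_const (b s 0))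
    refine h1.congr_deriv ?_
    simp only [hCdef, hVdef]
    noncomm_ring
  have hV0 : V 0 = 0 := by simp [hVdef, hU0]
  -- continuity facts
  have hacont : Continuous fun p : ℝ × ℝ => a p.1 p.2 :=
    continuous_matrix fun i j => (ha i j).continuous
  have hbcont : Continuous fun p : ℝ × ℝ => b p.1 p.2 :=
    continuous_matrix fun i j => (hb i j).continuous
  have hbtentry : ∀ i j, Continuous fun p : ℝ × ℝ => bt p.1 p.2 i j := by
    intro i j
    have hid : ∀ p : ℝ × ℝ, bt p.1 p.2 i j
        = fderiv ℝ (fun q : ℝ × ℝ => b q.1 q.2 i j) p (0, 1) := by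
      intro p
      have hF : HasFDerivAt (fun q : ℝ × ℝ => b q.1 q.2 i j)
          (fderiv ℝ (fun q : ℝ × ℝ => b q.1 q.2 i j) p) p :=
        (((hb i j).differentiable (by simp)) p).hasFDerivAt
      have hcurve : HasDerivAt (fun τ : ℝ => ((p.1, τ) : ℝ × ℝ)) (0, 1) p.2 :=
        (hasDerivAt_const (x := p.2) (c := p.1)).prodMk (hasDerivAt_id _)
      have hcomp := hF.comp_hasDerivAt p.2 hcurve
      exact (hbt p.1 p.2 i j).unique hcomp
    simp only [hid]
    exact ((hb i j).continuous_fderiv (by simp)).clm_apply continuous_const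
  have hCcont : Continuous fun p : ℝ × ℝ => C p.1 p.2 := by
    apply continuous_matrix
    intro i j
    simp only [hCdef, Matrix.add_apply, Matrix.sub_apply, Matrix.mul_apply]
    exact (hbtentry i j).add
      ((continuous_finset_sum _ fun k _ => ((hb i k).continuous.mul (ha k j).continuous)).sub
        (continuous_finset_sum _ fun k _ => ((ha i k).continuous.mul (hb k j).continuous)))
  -- compact set and bounds
  set Q : Set (ℝ × ℝ) := Icc (s-1) (s+1) ×ˢ Icc (0:ℝ) 1 with hQdef
  have hQc : IsCompact Q := isCompact_Icc.prod isCompact_Icc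
  obtain ⟨Ka, hKa⟩ := hQc.exists_bound_of_continuousOn hacont.continuousOn
  obtain ⟨Kb, hKb⟩ := hQc.exists_bound_of_continuousOn hbcont.continuousOn
  obtain ⟨Kc, hKc⟩ := hQc.exists_bound_of_continuousOn hCcont.continuousOn
  set K : ℝ := |Ka| + 1 with hKdef
  have hKpos : 0 < K := by positivity
  have haQ : ∀ σ t, σ ∈ Icc (s-1) (s+1) → t ∈ Icc (0:ℝ) 1 → ‖a σ t‖ ≤ K := by
    intro σ t h1 h2
    have := hKa (σ, t) ⟨h1, h2⟩
    have h3 := le_abs_self Ka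
    simp only at this
    linarith
  set KC : ℝ := |Kc| + 1 with hKCdef
  have hKCpos : 0 < KC := by positivity
  have hCQ : ∀ σ t, σ ∈ Icc (s-1) (s+1) → t ∈ Icc (0:ℝ) 1 → ‖C σ t‖ ≤ KC := by
    intro σ t h1 h2
    have := hKc (σ, t) ⟨h1, h2⟩
    have h3 := le_abs_self Kc
    simp only at this
    linarith
  set KB : ℝ := |Kb| + 1 with hKBdef
  have hsQ : s ∈ Icc (s-1) (s+1) := ⟨by linarith, by linarith⟩
  have hbQ : ∀ t, t ∈ Icc (0:ℝ) 1 → ‖b s t‖ ≤ KB := by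
    intro t h2
    have := hKb (s, t) ⟨hsQ, h2⟩
    have h3 := le_abs_self Kb
    simp only at this
    linarith
  -- bound on U
  set CU : ℝ := ‖(1 : Matrix (Fin n) (Fin n) ℝ)‖ * Real.exp K + 1 with hCUdef
  have hCUpos : 0 < CU := by positivity
  have hUQ : ∀ σ ∈ Icc (s-1) (s+1), ∀ t ∈ Icc (0:ℝ) 1, ‖U σ t‖ ≤ CU := by
    intro σ hσ t ht
    have hg := norm_le_gronwallBound_of_norm_deriv_right_le
      (f := fun τ => U σ τ) (f' := fun τ => a σ τ * U σ τ)
      (δ := ‖(1 : Matrix (Fin n) (Fin n) ℝ)‖) (K := K) (ε := 0) (a := (0:ℝ)) (b := 1)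
      (fun τ _ => (hU' σ τ).continuousAt.continuousWithinAt)
      (fun τ _ => (hU' σ τ).hasDerivWithinAt)
      (by simp only [hU0, le_refl])
      (fun τ hτ => by
        have h1 := haQ σ τ hσ (Ico_subset_Icc_self hτ)
        have h2 := norm_mul_le (a σ τ) (U σ τ)
        have h3 := norm_nonneg (U σ τ)
        nlinarith)
    have h4 := hg t ht
    rw [gronwallBound_ε0] at h4
    have h5 : Real.exp (K * (t - 0)) ≤ Real.exp K := by
      apply Real.exp_le_exp.2
      nlinarith [ht.1, ht.2]
    have h6 := norm_nonneg (1 : Matrix (Fin n) (Fin n) ℝ)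
    nlinarith
  set CV : ℝ := 2 * KB * CU with hCVdef
  have hCVpos : 0 < CV := by positivity
  have hVQ : ∀ t ∈ Icc (0:ℝ) 1, ‖V t‖ ≤ CV := by
    intro t ht
    have h1 := hbQ t ht
    have h2 := hbQ 0 ⟨le_refl _, by norm_num⟩
    have h3 := hUQ s hsQ t ht
    have h4 := norm_sub_le (b s t * U s t) (U s t * b s 0)
    have h5 := norm_mul_le (b s t) (U s t)
    have h6 := norm_mul_le (U s t) (b s 0)
    have h7 := norm_nonneg (U s t)
    have h8 := norm_nonneg (b s t)
    have h9 := norm_nonneg (b s 0)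
    rw [hVdef]
    simp only
    nlinarith
  -- the little-o argument
  have hV1 : b s 1 * U s 1 - U s 1 * b s 0 = V 1 := rfl
  rw [hV1]
  refine hasDerivAt_iff_isLittleO.2 ?_
  rw [Asymptotics.isLittleO_iff]
  intro c hc
  set C₂ : ℝ := (Real.exp K - 1) / K with hC2def
  have hexp : K + 1 < Real.exp K := Real.add_one_lt_exp hKpos.ne'
  have hC2pos : 0 < C₂ := div_pos (by linarith) hKpos
  set ε₁ : ℝ := c / (2 * C₂ * CU) with hε₁def
  have hε₁pos : 0 < ε₁ := by positivity
  obtain ⟨δ₁, hδ₁pos, hδ₁⟩ := Metric.uniformContinuousOn_iff.mp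
    (hQc.uniformContinuousOn_of_continuous hCcont.continuousOn) ε₁ hε₁pos
  set δ : ℝ := min δ₁ (min 1 (c / (2 * C₂ * KC * (CV + 1)))) with hδdef
  have hδpos : 0 < δ := lt_min hδ₁pos (lt_min one_pos (by positivity))
  filter_upwards [Metric.ball_mem_nhds s hδpos] with σ hσ
  rw [Metric.mem_ball, Real.dist_eq] at hσ
  have hσ1 : |σ - s| ≤ 1 := le_trans hσ.le (le_trans (min_le_right _ _) (min_le_left _ _))
  have hσδ₁ : |σ - s| < δ₁ := lt_of_lt_of_le hσ (min_le_left _ _)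
  have hσδ₂ : |σ - s| ≤ c / (2 * C₂ * KC * (CV + 1)) :=
    le_trans hσ.le (le_trans (min_le_right _ _) (min_le_right _ _))
  have hσQ : σ ∈ Icc (s-1) (s+1) := by
    rw [abs_le] at hσ1
    constructor <;> linarith [hσ1.1, hσ1.2]
  -- the error function E
  set E : ℝ → Matrix (Fin n) (Fin n) ℝ := fun t => U σ t - U s t - (σ - s) • V t with hEdef
  have hE0 : E 0 = 0 := by simp [hEdef, hU0, hV0]
  have hE' : ∀ t, HasDerivAt E
      (a σ t * E t + ((a σ t - a s t - (σ - s) • C s t) * U s t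
        + (σ - s) • ((a σ t - a s t) * V t))) t := by
    intro t
    have h1 := ((hU' σ t).sub (hU' s t)).sub ((hV' t).const_smul (σ - s))
    refine h1.congr_deriv ?_
    have hsub : U σ t = E t + U s t + (σ - s) • V t := by
      simp only [hEdef]
      abel
    rw [hsub]
    simp only [mul_add, add_mul, sub_mul, mul_sub, smul_sub, smul_add,
      mul_smul_comm, smul_mul_assoc]
    abel
  -- mean value estimates
  have hMVT : ∀ (g : ℝ → Matrix (Fin n) (Fin n) ℝ)
      (g' : ℝ → Matrix (Fin n) (Fin n) ℝ) (Cb : ℝ),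
      (∀ ρ ∈ uIcc s σ, HasDerivAt g (g' ρ) ρ) →
      (∀ ρ ∈ uIcc s σ, ‖g' ρ‖ ≤ Cb) →
      ‖g σ - g s‖ ≤ Cb * |σ - s| := by
    intro g g' Cb hg hgb
    have := (convex_uIcc s σ).norm_image_sub_le_of_norm_hasDerivWithin_le
      (fun ρ hρ => (hg ρ hρ).hasDerivWithinAt) hgb left_mem_uIcc right_mem_uIcc
    simpa [Real.norm_eq_abs] using this
  have huIccQ : ∀ ρ ∈ uIcc s σ, ρ ∈ Icc (s-1) (s+1) := by
    intro ρ hρ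
    have h1 : |ρ - s| ≤ |σ - s| := abs_sub_left_of_mem_uIcc hρ
    have h2 : |ρ - s| ≤ 1 := le_trans h1 hσ1
    rw [abs_le] at h2
    constructor <;> linarith [h2.1, h2.2]
  have hMVT1 : ∀ t ∈ Icc (0:ℝ) 1, ‖a σ t - a s t - (σ - s) • C s t‖ ≤ ε₁ * |σ - s| := by
    intro t ht
    have h := hMVT (fun ρ => a ρ t - (ρ - s) • C s t) (fun ρ => C ρ t - C s t) ε₁
      (fun ρ _ => by
        have h2 : HasDerivAt (fun ρ => a ρ t - (ρ - s) • C s t) (C ρ t - (1:ℝ) • C s t) ρ :=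
          (ha' ρ t).sub (((hasDerivAt_id ρ).sub_const s).smul_const (C s t))
        simpa using h2)
      (fun ρ hρ => by
        have hρ1 : |ρ - s| ≤ |σ - s| := abs_sub_left_of_mem_uIcc hρ
        have hd : dist ((ρ, t) : ℝ × ℝ) ((s, t) : ℝ × ℝ) < δ₁ := by
          rw [Prod.dist_eq]
          simp only [Real.dist_eq, sub_self, abs_zero]
          exact max_lt (lt_of_le_of_lt hρ1 hσδ₁) hδ₁pos
        have := hδ₁ (ρ, t) ⟨huIccQ ρ hρ, ht⟩ (s, t) ⟨hsQ, ht⟩ hd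
        rw [dist_eq_norm] at this
        exact this.le)
    have heq : a σ t - a s t - (σ - s) • C s t
        = (a σ t - (σ - s) • C s t) - (a s t - (s - s) • C s t) := by
      simp only [sub_self, zero_smul, sub_zero]
      abel
    rw [heq]
    simpa using h
  have hMVT2 : ∀ t ∈ Icc (0:ℝ) 1, ‖a σ t - a s t‖ ≤ KC * |σ - s| := fun t ht =>
    hMVT (fun ρ => a ρ t) (fun ρ => C ρ t) KC (fun ρ _ => ha' ρ t)
      (fun ρ hρ => hCQ ρ t (huIccQ ρ hρ) ht)
  set εh : ℝ := (c / C₂) * |σ - s| with hεhdef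
  have hεbound : ∀ t ∈ Ico (0:ℝ) 1,
      ‖a σ t * E t + ((a σ t - a s t - (σ - s) • C s t) * U s t
        + (σ - s) • ((a σ t - a s t) * V t))‖ ≤ K * ‖E t‖ + εh := by
    intro t ht
    have ht' : t ∈ Icc (0:ℝ) 1 := Ico_subset_Icc_self ht
    have h1 : ‖a σ t * E t‖ ≤ K * ‖E t‖ := by
      have h2 := haQ σ t hσQ ht'
      exact le_trans (norm_mul_le _ _) (mul_le_mul_of_nonneg_right h2 (norm_nonneg _))
    have h3 : ‖(a σ t - a s t - (σ - s) • C s t) * U s t‖ ≤ ε₁ * |σ - s| * CU := by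
      have h4 := hMVT1 t ht'
      have h5 := hUQ s hsQ t ht'
      exact le_trans (norm_mul_le _ _)
        (mul_le_mul h4 h5 (norm_nonneg _) (by positivity))
    have h6 : ‖(σ - s) • ((a σ t - a s t) * V t)‖ ≤ |σ - s| * (KC * |σ - s| * CV) := by
      rw [norm_smul, Real.norm_eq_abs]
      have h7 := hMVT2 t ht'
      have h8 := hVQ t ht'
      have h9 : ‖(a σ t - a s t) * V t‖ ≤ KC * |σ - s| * CV :=
        le_trans (norm_mul_le _ _) (mul_le_mul h7 h8 (norm_nonneg _) (by positivity))
      exact mul_le_mul_of_nonneg_left h9 (abs_nonneg _)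
    have hsmall : ε₁ * |σ - s| * CU + |σ - s| * (KC * |σ - s| * CV) ≤ εh := by
      have e1 : ε₁ * CU = c / (2 * C₂) := by
        rw [hε₁def]
        field_simp
      have hx' : |σ - s| * (2 * C₂ * KC * (CV + 1)) ≤ c :=
        (le_div_iff₀ (by positivity)).mp hσδ₂
      have e2 : KC * |σ - s| * CV * (2 * C₂) ≤ c := by
        refine le_trans ?_ hx'
        have hxk : (0:ℝ) ≤ |σ - s| * (2 * C₂ * KC) := by positivity
        calc KC * |σ - s| * CV * (2 * C₂) = |σ - s| * (2 * C₂ * KC) * CV := by ring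
          _ ≤ |σ - s| * (2 * C₂ * KC) * (CV + 1) :=
              mul_le_mul_of_nonneg_left (by linarith) hxk
          _ = |σ - s| * (2 * C₂ * KC * (CV + 1)) := by ring
      have e2' : KC * |σ - s| * CV ≤ c / (2 * C₂) := by
        rw [le_div_iff₀ (by positivity)]
        linarith
      have : ε₁ * |σ - s| * CU + |σ - s| * (KC * |σ - s| * CV)
          ≤ |σ - s| * (c / (2 * C₂)) + |σ - s| * (c / (2 * C₂)) := by
        have t1 : ε₁ * |σ - s| * CU = |σ - s| * (c / (2 * C₂)) := by rw [← e1]; ring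
        have t2 : |σ - s| * (KC * |σ - s| * CV) ≤ |σ - s| * (c / (2 * C₂)) :=
          mul_le_mul_of_nonneg_left e2' (abs_nonneg _)
        linarith
      rw [hεhdef]
      have hC2ne := hC2pos.ne'
      calc ε₁ * |σ - s| * CU + |σ - s| * (KC * |σ - s| * CV)
          ≤ |σ - s| * (c / (2 * C₂)) + |σ - s| * (c / (2 * C₂)) := this
        _ = c / C₂ * |σ - s| := by field_simp; ring
    calc ‖a σ t * E t + ((a σ t - a s t - (σ - s) • C s t) * U s t
          + (σ - s) • ((a σ t - a s t) * V t))‖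
        ≤ ‖a σ t * E t‖ + (‖(a σ t - a s t - (σ - s) • C s t) * U s t‖
          + ‖(σ - s) • ((a σ t - a s t) * V t)‖) :=
          le_trans (norm_add_le _ _) (by gcongr; exact norm_add_le _ _)
      _ ≤ K * ‖E t‖ + (ε₁ * |σ - s| * CU + |σ - s| * (KC * |σ - s| * CV)) := by
          gcongr
      _ ≤ K * ‖E t‖ + εh := by linarith
  have hgE := norm_le_gronwallBound_of_norm_deriv_right_le (f := E)
    (f' := fun t => a σ t * E t + ((a σ t - a s t - (σ - s) • C s t) * U s t
      + (σ - s) • ((a σ t - a s t) * V t))) (δ := 0) (K := K) (ε := εh) (a := (0:ℝ)) (b := 1)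
    (fun τ _ => (hE' τ).continuousAt.continuousWithinAt)
    (fun τ _ => (hE' τ).hasDerivWithinAt)
    (by simp [hE0]) hεbound
  have hfin := hgE 1 ⟨zero_le_one, le_refl 1⟩
  rw [gronwallBound_of_K_ne_0 hKpos.ne'] at hfin
  have hc2 : (0:ℝ) * Real.exp (K * (1 - 0)) + εh / K * (Real.exp (K * (1 - 0)) - 1)
      = εh * C₂ := by
    rw [hC2def, show K * (1 - 0) = K by ring]
    field_simp
    ring
  rw [show ((1:ℝ) - 0) = 1 by norm_num] at hfin
  simp only at hfin
  rw [show K * (1:ℝ) = K * (1 - 0) by ring] at hfin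
  rw [hc2] at hfin
  have hεhC2 : εh * C₂ = c * |σ - s| := by
    rw [hεhdef]
    have hC2ne := hC2pos.ne'
    field_simp
  have hgoal : ‖U σ 1 - U s 1 - (σ - s) • V 1‖ ≤ c * |σ - s| := by
    calc ‖U σ 1 - U s 1 - (σ - s) • V 1‖ = ‖E 1‖ := rfl
      _ ≤ εh * C₂ := hfin
      _ = c * |σ - s| := hεhC2
  simpa [Real.norm_eq_abs] using hgoal


noncomputable def entryCLM (n : ℕ) (i j : Fin n) : Matrix (Fin n) (Fin n) ℝ →L[ℝ] ℝ :=
  LinearMap.toContinuousLinearMap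
    { toFun := fun M => M i j
      map_add' := fun _ _ => rfl
      map_smul' := fun _ _ => rfl }

/-- **Trace of the holonomy is invariant.** In the setting of the gauge covariance of
holonomy (`∂ₛ a = ∂ₜ b + [b,a]`, `U s` the solution of `∂ₜ U = a U`, `U s 0 = 1`), if in
addition `b s 1 = b s 0` for all `s` (closed-loop condition), then
`∂ₛ tr(U s 1) = 0`. -/
theorem stmt13 (n : ℕ)
    (a b bt U : ℝ → ℝ → Matrix (Fin n) (Fin n) ℝ)
    (ha : ∀ i j, ContDiff ℝ (⊤ : ℕ∞) fun p : ℝ × ℝ => a p.1 p.2 i j)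
    (hb : ∀ i j, ContDiff ℝ (⊤ : ℕ∞) fun p : ℝ × ℝ => b p.1 p.2 i j)
    (hbt : ∀ (s t : ℝ) (i j : Fin n),
      HasDerivAt (fun τ => b s τ i j) (bt s t i j) t)
    (hU0 : ∀ s, U s 0 = 1)
    (hUode : ∀ (s t : ℝ) (i j : Fin n),
      HasDerivAt (fun τ => U s τ i j) ((a s t * U s t) i j) t)
    (hgauge : ∀ (s t : ℝ) (i j : Fin n),
      HasDerivAt (fun σ => a σ t i j)
        ((bt s t + (b s t * a s t - a s t * b s t)) i j) s)
    (hloop : ∀ s : ℝ, b s 1 = b s 0) :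
    ∀ s : ℝ, HasDerivAt (fun σ => (U σ 1).trace) 0 s := by
  intro s
  have Hmain : HasDerivAt (fun σ => U σ 1) (b s 1 * U s 1 - U s 1 * b s 0) s :=
    stmt13_aux n a b bt U ha hb hbt hU0 hUode hgauge s
  have hentry : ∀ i j, HasDerivAt (fun σ => U σ 1 i j)
      ((b s 1 * U s 1 - U s 1 * b s 0) i j) s := fun i j =>
    (entryCLM n i j).hasFDerivAt.comp_hasDerivAt s Hmain
  have htr : ∀ σ : ℝ, (U σ 1).trace = ∑ i, U σ 1 i i := fun σ => rfl
  have hsum : HasDerivAt (fun σ => ∑ i, U σ 1 i i)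
      (∑ i, (b s 1 * U s 1 - U s 1 * b s 0) i i) s :=
    HasDerivAt.fun_sum fun i _ => hentry i i
  have hzero : ∑ i, (b s 1 * U s 1 - U s 1 * b s 0) i i = 0 := by
    have h1 : ∑ i, (b s 1 * U s 1 - U s 1 * b s 0) i i
        = (b s 1 * U s 1 - U s 1 * b s 0).trace := rfl
    rw [h1, Matrix.trace_sub, hloop s, Matrix.trace_mul_comm (b s 0) (U s 1), sub_self]
  simp only [htr]
  rw [← hzero]
  exact hsum
end
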